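/- For T ≥ r ≥ 1, p ∈ [1,2], and m ≥ 1 inputs u_1,...,u_m in the unit ℓ_p-ball of ℝ^T, define Σ(u) = ∑_{k=1}^m Toep(u_k)ᵀToep(u_k). Then for any such inputs with Σ(u) invertible, Tr([Σ(u)⁻¹]_{[r]}) ≥ r/m, where [M]_{[r]} is the upper-left r×r block; moreover the choice u_1 = ... = u_m = e_1 achieves Tr([Σ(u)⁻¹]_{[r]}) = r/m. -/

import Mathlib

/-!
`Σ(u)` is positive semidefinite and its `i`-th diagonal entry is the sum over `k` of the squared
`ℓ₂`-norms of the `i`-th columns of `Toep(uₖ)`, which are truncated shifts of `uₖ`; hence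
`Σ(u)ᵢᵢ ≤ ∑ₖ ‖uₖ‖₂² ≤ m`, since `‖·‖₂ ≤ ‖·‖_p ≤ 1` for `p ≤ 2`. Cauchy–Schwarz for the form
`xᵀ Σ y` at `eᵢ` and `Σ⁻¹ eᵢ` gives `(Σ⁻¹)ᵢᵢ ≥ 1 / Σᵢᵢ ≥ 1 / m`, and summing over `i < r` bounds
the trace of the upper-left block. For `uₖ = e₁` every `Toep(uₖ)` is the identity, so `Σ = m I`.
-/

open Matrix

/-- Lower-triangular Toeplitz matrix with first column `v`. -/
def ToepR {T : ℕ} (v : Fin T → ℝ) : Matrix (Fin T) (Fin T) ℝ :=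
  fun k ℓ => if (ℓ : ℕ) ≤ (k : ℕ) then
    v ⟨(k : ℕ) - (ℓ : ℕ), lt_of_le_of_lt (Nat.sub_le _ _) k.isLt⟩ else 0

open Finset

namespace Matrix

variable {m n : Type*} [Fintype m] [Fintype n] [DecidableEq n]

theorem PosDef.inv_diag_le_diag_inv {A : Matrix n n ℝ} (hA : A.PosDef) (i : n) :
    (A i i)⁻¹ ≤ A⁻¹ i i := by
  have hdet : IsUnit A.det := (isUnit_iff_isUnit_det A).mp hA.isUnit
  set e : n → ℝ := Pi.single i 1
  set y : n → ℝ := A⁻¹ *ᵥ e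
  have hAy : A *ᵥ y = e := by rw [mulVec_mulVec, mul_nonsing_inv _ hdet, one_mulVec]
  have hyA : y ᵥ* A = e := by
    rw [← mulVec_transpose, ← conjTranspose_eq_transpose_of_trivial, hA.isHermitian.eq, hAy]
  have hCS := LinearMap.BilinForm.apply_mul_apply_le_of_forall_zero_le (toBilin' A)
    (fun x => by simpa [toBilin'_apply'] using hA.posSemidef.dotProduct_mulVec_nonneg x) e y
  simp only [toBilin'_apply'] at hCS
  rw [hAy, dotProduct_mulVec, hyA] at hCS
  rw [inv_le_iff_one_le_mul₀' hA.diag_pos]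
  simpa [e, y, mulVec_single, dotProduct_single, single_dotProduct] using hCS

theorem PosDef.card_div_le_trace_inv_submatrix {A : Matrix n n ℝ} (hA : A.PosDef) {c : ℝ}
    (hc : ∀ i, A i i ≤ c) (f : m → n) :
    (Fintype.card m : ℝ) / c ≤ (A⁻¹.submatrix f f).trace := by
  have hdiag (i : n) : c⁻¹ ≤ A⁻¹ i i :=
    (inv_anti₀ hA.diag_pos (hc i)).trans (hA.inv_diag_le_diag_inv i)
  calc (Fintype.card m : ℝ) / c = ∑ _j : m, c⁻¹ := by simp [div_eq_mul_inv]
    _ ≤ (A⁻¹.submatrix f f).trace := sum_le_sum fun j _ => hdiag (f j)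

omit [Fintype n] [DecidableEq n] in
theorem transpose_mul_self_apply_self {R : Type*} [CommSemiring R] (A : Matrix m n R) (i : n) :
    (Aᵀ * A) i i = ∑ ℓ, A ℓ i ^ 2 := by
  simp [mul_apply, sq]

theorem inv_smul_one {K : Type*} [Field K] (c : K) : (c • (1 : Matrix n n K))⁻¹ = c⁻¹ • 1 := by
  rcases eq_or_ne c 0 with rfl | hc
  · simp
  · exact inv_eq_left_inv (by simp [smul_smul, hc])

end Matrix

theorem sum_sq_le_one_of_rpow_norm_le_one {ι : Type*} [Fintype ι] {p : ℝ} (hp0 : 0 < p)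
    (hp2 : p ≤ 2) {v : ι → ℝ} (hv : (∑ j, |v j| ^ p) ^ (1 / p) ≤ 1) : ∑ j, v j ^ 2 ≤ 1 := by
  have hsum : ∑ j, |v j| ^ p ≤ 1 := by
    rwa [one_div, Real.rpow_inv_le_iff_of_pos (by positivity) zero_le_one hp0, Real.one_rpow] at hv
  have habs (j : ι) : |v j| ≤ 1 := by
    have : |v j| ^ p ≤ 1 := (single_le_sum (fun j _ => by positivity) (mem_univ j)).trans hsum
    by_contra! h
    exact this.not_gt (Real.one_lt_rpow h hp0)
  calc ∑ j, v j ^ 2 = ∑ j, |v j| ^ (2 : ℝ) := by simp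
    _ ≤ ∑ j, |v j| ^ p := sum_le_sum fun j _ =>
        Real.rpow_le_rpow_of_exponent_ge' (abs_nonneg _) (habs j) hp0.le hp2
    _ ≤ 1 := hsum

theorem sum_sq_toepR_apply_le {T : ℕ} (v : Fin T → ℝ) (i : Fin T) :
    ∑ ℓ, ToepR v ℓ i ^ 2 ≤ ∑ j, v j ^ 2 := by
  let shift : Fin T → Fin T := fun ℓ => ⟨ℓ - i, lt_of_le_of_lt (Nat.sub_le _ _) ℓ.isLt⟩
  have hinj : Set.InjOn shift (univ.filter (i ≤ ·)) := fun a ha b hb h => by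
    simp only [shift, Fin.ext_iff, coe_filter, Set.mem_ofPred_eq, mem_univ, true_and,
      Fin.le_iff_val_le_val] at h ha hb ⊢
    omega
  calc ∑ ℓ, ToepR v ℓ i ^ 2 = ∑ ℓ with i ≤ ℓ, v (shift ℓ) ^ 2 := by
        rw [sum_filter]
        refine sum_congr rfl fun ℓ _ => ?_
        simp only [ToepR, ← Fin.le_iff_val_le_val]
        split_ifs <;> simp [shift]
    _ = ∑ j ∈ (univ.filter (i ≤ ·)).image shift, v j ^ 2 := by
        rw [sum_image hinj]
    _ ≤ ∑ j, v j ^ 2 := sum_le_univ_sum_of_nonneg fun _ => sq_nonneg _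

theorem toepR_ite_eq_one {T : ℕ} (z : Fin T) (hz : (z : ℕ) = 0) :
    ToepR (fun ℓ : Fin T => if ℓ = z then (1 : ℝ) else 0) = 1 := by
  ext k ℓ
  simp only [ToepR, one_apply, Fin.ext_iff, hz]
  split_ifs <;> first | rfl | omega

def toepGram {ι : Type*} [Fintype ι] {T : ℕ} (u : ι → Fin T → ℝ) : Matrix (Fin T) (Fin T) ℝ :=
  ∑ k, (ToepR (u k))ᵀ * ToepR (u k)

section toepGram

variable {ι : Type*} [Fintype ι] {T : ℕ} (u : ι → Fin T → ℝ)

theorem toepGram_posSemidef : (toepGram u).PosSemidef :=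
  posSemidef_sum _ fun k _ => by
    simpa using posSemidef_conjTranspose_mul_self (ToepR (u k))

theorem toepGram_apply_self_le_card (hu : ∀ k, ∑ j, u k j ^ 2 ≤ 1) (i : Fin T) :
    toepGram u i i ≤ Fintype.card ι := by
  calc toepGram u i i = ∑ k, ∑ ℓ, ToepR (u k) ℓ i ^ 2 := by
        simp only [toepGram, Matrix.sum_apply, transpose_mul_self_apply_self]
    _ ≤ ∑ _k : ι, (1 : ℝ) := sum_le_sum fun k _ => (sum_sq_toepR_apply_le (u k) i).trans (hu k)
    _ = Fintype.card ι := by simp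

end toepGram

theorem aopt_lp_one_two (T r m : ℕ) (hr : 1 ≤ r) (hTr : r ≤ T)
    (p : ℝ) (hp1 : 1 ≤ p) (hp2 : p ≤ 2) :
    (∀ u : Fin m → Fin T → ℝ,
      (∀ k, (∑ ℓ, |u k ℓ| ^ p) ^ (1 / p) ≤ 1) →
      IsUnit (∑ k, (ToepR (u k)).transpose * ToepR (u k)).det →
      ((∑ k, (ToepR (u k)).transpose * ToepR (u k))⁻¹.submatrix
          (Fin.castLE hTr) (Fin.castLE hTr)).trace ≥ (r : ℝ) / m) ∧
    ((∑ _k : Fin m, (ToepR (fun ℓ : Fin T => if ℓ = ⟨0, by omega⟩ then (1 : ℝ) else 0)).transpose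
        * ToepR (fun ℓ : Fin T => if ℓ = ⟨0, by omega⟩ then (1 : ℝ) else 0))⁻¹.submatrix
          (Fin.castLE hTr) (Fin.castLE hTr)).trace = (r : ℝ) / m := by
  refine ⟨fun u hu hdet => ?_, ?_⟩
  · have hpos : (toepGram u).PosDef :=
      (toepGram_posSemidef u).posDef_iff_isUnit.mpr ((isUnit_iff_isUnit_det _).mpr hdet)
    have hdiag (i : Fin T) : toepGram u i i ≤ m := by
      simpa using toepGram_apply_self_le_card u
        (fun k => sum_sq_le_one_of_rpow_norm_le_one (by linarith) hp2 (hu k)) i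
    simpa only [Fintype.card_fin, ge_iff_le, toepGram] using
      hpos.card_div_le_trace_inv_submatrix hdiag (Fin.castLE hTr)
  · rw [toepR_ite_eq_one _ rfl, transpose_one, mul_one, sum_const, card_univ, Fintype.card_fin,
      ← Nat.cast_smul_eq_nsmul ℝ, inv_smul_one]
    simp [trace, div_eq_mul_inv]
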